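/- Let F : ℝⁿ → ℝⁿ be differentiable everywhere with Jacobian J(x), let x* ∈ ℝⁿ satisfy F(x*) = 0, and suppose ‖J(x) − J(x*)‖ ≤ M‖x − x*‖ for all x ∈ ℝⁿ, where M > 0. Let x, x₊ ∈ ℝⁿ and B ∈ ℝ^{n×n}, and write σ := ‖B − J(x)‖_F, r := ‖x − x*‖, r₊ := ‖x₊ − x*‖. Then the average over the standard basis directions satisfies (1/n) ∑_{i=1}^n ‖Broyd(B, J(x₊), e_i) − J(x₊)‖_F² ≤ (1 − 1/n) σ² + 2σ√n M (r + r₊) + n M² (r + r₊)². -/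
import Mathlib

open Matrix

noncomputable def vecNorm {n : ℕ} (u : Fin n → ℝ) : ℝ := Real.sqrt (∑ i, u i ^ 2)

noncomputable def frobNorm {n : ℕ} (M : Matrix (Fin n) (Fin n) ℝ) : ℝ :=
  Real.sqrt (∑ i, ∑ j, M i j ^ 2)

noncomputable def specNorm {n : ℕ} (M : Matrix (Fin n) (Fin n) ℝ) : ℝ :=
  sSup {r : ℝ | ∃ u : Fin n → ℝ, vecNorm u = 1 ∧ r = vecNorm (M.mulVec u)}

noncomputable def broyd {n : ℕ} (B A : Matrix (Fin n) (Fin n) ℝ) (u : Fin n → ℝ) :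
    Matrix (Fin n) (Fin n) ℝ :=
  B + (∑ i, u i ^ 2)⁻¹ • ((A - B) * Matrix.vecMulVec u u)

noncomputable def matCLM {n : ℕ} (M : Matrix (Fin n) (Fin n) ℝ) :
    (Fin n → ℝ) →L[ℝ] (Fin n → ℝ) :=
  LinearMap.toContinuousLinearMap M.mulVecLin

lemma vecNorm_nonneg {n : ℕ} (u : Fin n → ℝ) : 0 ≤ vecNorm u := Real.sqrt_nonneg _

lemma vecNorm_sq {n : ℕ} (u : Fin n → ℝ) : vecNorm u ^ 2 = ∑ i, u i ^ 2 :=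
  Real.sq_sqrt (by positivity)

lemma frobNorm_nonneg {n : ℕ} (X : Matrix (Fin n) (Fin n) ℝ) : 0 ≤ frobNorm X :=
  Real.sqrt_nonneg _

lemma frobNorm_sq {n : ℕ} (X : Matrix (Fin n) (Fin n) ℝ) :
    frobNorm X ^ 2 = ∑ i, ∑ j, X i j ^ 2 :=
  Real.sq_sqrt (by positivity)

lemma sum_single_sq {n : ℕ} (i : Fin n) : ∑ j, (Pi.single i 1 : Fin n → ℝ) j ^ 2 = 1 := by
  have : ∀ j, (Pi.single i 1 : Fin n → ℝ) j ^ 2 = if j = i then 1 else 0 := by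
    intro j
    by_cases h : j = i <;> simp [Pi.single_apply, h]
  simp [this]

lemma vecNorm_single {n : ℕ} (i : Fin n) : vecNorm (Pi.single i 1 : Fin n → ℝ) = 1 := by
  rw [vecNorm, sum_single_sq, Real.sqrt_one]

-- Cauchy-Schwarz: operator bound by Frobenius norm
lemma vecNorm_mulVec_le {n : ℕ} (M : Matrix (Fin n) (Fin n) ℝ) (u : Fin n → ℝ) :
    vecNorm (M.mulVec u) ≤ frobNorm M * vecNorm u := by
  have h1 : vecNorm (M.mulVec u) ^ 2 ≤ (frobNorm M * vecNorm u) ^ 2 := by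
    rw [mul_pow, vecNorm_sq, frobNorm_sq, vecNorm_sq, Finset.sum_mul]
    apply Finset.sum_le_sum
    intro i _
    simpa [Matrix.mulVec, dotProduct] using
      Finset.sum_mul_sq_le_sq_mul_sq Finset.univ (fun j => M i j) u
  calc vecNorm (M.mulVec u) = Real.sqrt (vecNorm (M.mulVec u) ^ 2) :=
        (Real.sqrt_sq (vecNorm_nonneg _)).symm
    _ ≤ Real.sqrt ((frobNorm M * vecNorm u) ^ 2) := Real.sqrt_le_sqrt h1
    _ = frobNorm M * vecNorm u :=
        Real.sqrt_sq (mul_nonneg (frobNorm_nonneg M) (vecNorm_nonneg u))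

lemma specSet_bddAbove {n : ℕ} (M : Matrix (Fin n) (Fin n) ℝ) :
    BddAbove {r : ℝ | ∃ u : Fin n → ℝ, vecNorm u = 1 ∧ r = vecNorm (M.mulVec u)} := by
  refine ⟨frobNorm M, ?_⟩
  rintro r ⟨u, hu, rfl⟩
  have := vecNorm_mulVec_le M u
  rwa [hu, mul_one] at this

lemma col_le_spec {n : ℕ} (M : Matrix (Fin n) (Fin n) ℝ) (i : Fin n) :
    vecNorm (M.mulVec (Pi.single i 1)) ≤ specNorm M :=
  le_csSup (specSet_bddAbove M) ⟨Pi.single i 1, vecNorm_single i, rfl⟩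

lemma spec_nonneg {n : ℕ} (hn : 0 < n) (M : Matrix (Fin n) (Fin n) ℝ) :
    0 ≤ specNorm M :=
  le_trans (vecNorm_nonneg _) (col_le_spec M ⟨0, hn⟩)

lemma frob_le_sqrt_n_spec {n : ℕ} (hn : 0 < n) (M : Matrix (Fin n) (Fin n) ℝ) :
    frobNorm M ≤ Real.sqrt n * specNorm M := by
  have hcol : ∀ i, vecNorm (M.mulVec (Pi.single i 1)) ^ 2 = ∑ j, M j i ^ 2 := by
    intro i
    rw [vecNorm_sq]
    congr 1; ext j
    simp [Matrix.mulVec_single]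
  have h1 : frobNorm M ^ 2 ≤ (n : ℝ) * specNorm M ^ 2 := by
    rw [frobNorm_sq, Finset.sum_comm]
    calc ∑ i : Fin n, ∑ j, M j i ^ 2 = ∑ i : Fin n, vecNorm (M.mulVec (Pi.single i 1)) ^ 2 :=
          Finset.sum_congr rfl fun i _ => (hcol i).symm
      _ ≤ ∑ _i : Fin n, specNorm M ^ 2 := by
          apply Finset.sum_le_sum
          intro i _
          exact pow_le_pow_left₀ (vecNorm_nonneg _) (col_le_spec M i) 2
      _ = (n : ℝ) * specNorm M ^ 2 := by simp [mul_comm]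
  calc frobNorm M = Real.sqrt (frobNorm M ^ 2) := (Real.sqrt_sq (frobNorm_nonneg _)).symm
    _ ≤ Real.sqrt ((n : ℝ) * specNorm M ^ 2) := Real.sqrt_le_sqrt h1
    _ = Real.sqrt n * specNorm M := by
        rw [Real.sqrt_mul (by positivity), Real.sqrt_sq (spec_nonneg hn M)]

lemma frobNorm_eq_norm {n : ℕ} (X : Matrix (Fin n) (Fin n) ℝ) :
    frobNorm X = ‖(WithLp.equiv 2 (Fin n × Fin n → ℝ)).symm (fun p => X p.1 p.2)‖ := by
  rw [EuclideanSpace.norm_eq]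
  rw [frobNorm, Fintype.sum_prod_type]
  congr 1
  refine Finset.sum_congr rfl fun i _ => Finset.sum_congr rfl fun j _ => ?_
  simp [sq_abs]

lemma frob_triangle {n : ℕ} (A B : Matrix (Fin n) (Fin n) ℝ) :
    frobNorm (A + B) ≤ frobNorm A + frobNorm B := by
  rw [frobNorm_eq_norm, frobNorm_eq_norm A, frobNorm_eq_norm B]
  have : (WithLp.equiv 2 (Fin n × Fin n → ℝ)).symm (fun p => (A + B) p.1 p.2)
      = (WithLp.equiv 2 (Fin n × Fin n → ℝ)).symm (fun p => A p.1 p.2)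
        + (WithLp.equiv 2 (Fin n × Fin n → ℝ)).symm (fun p => B p.1 p.2) := rfl
  rw [this]
  exact norm_add_le _ _

lemma frob_sub_comm {n : ℕ} (A B : Matrix (Fin n) (Fin n) ℝ) :
    frobNorm (A - B) = frobNorm (B - A) := by
  unfold frobNorm
  congr 1
  refine Finset.sum_congr rfl fun i _ => Finset.sum_congr rfl fun j _ => ?_
  simp [Matrix.sub_apply]
  ring

lemma broyd_entry {n : ℕ} (B A : Matrix (Fin n) (Fin n) ℝ) (i : Fin n) (j k : Fin n) :
    (broyd B A (Pi.single i 1) - A) j k = if k = i then 0 else (B - A) j k := by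
  have hmul : ((A - B) * Matrix.vecMulVec (Pi.single i 1 : Fin n → ℝ) (Pi.single i 1)) j k
      = (A - B) j i * (Pi.single i 1 : Fin n → ℝ) k := by
    rw [Matrix.mul_apply]
    have : ∀ l, (A - B) j l * Matrix.vecMulVec (Pi.single i 1 : Fin n → ℝ) (Pi.single i 1) l k
        = if l = i then (A - B) j i * (Pi.single i 1 : Fin n → ℝ) k else 0 := by
      intro l
      by_cases h : l = i <;> simp [Matrix.vecMulVec_apply, Pi.single_apply, h, mul_comm, mul_assoc]
    rw [Finset.sum_congr rfl fun l _ => this l]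
    simp
  simp only [broyd, Matrix.sub_apply, Matrix.add_apply, sum_single_sq, inv_one, one_smul,
    Matrix.smul_apply, hmul]
  by_cases h : k = i <;> simp [Pi.single_apply, h, Matrix.sub_apply]

lemma sum_ite_zero {n : ℕ} (i : Fin n) (f : Fin n → ℝ) :
    ∑ k, (if k = i then 0 else f k) = (∑ k, f k) - f i := by
  have : ∀ k, (if k = i then 0 else f k) = f k - (if k = i then f k else 0) := by
    intro k; by_cases h : k = i <;> simp [h]
  rw [Finset.sum_congr rfl fun k _ => this k, Finset.sum_sub_distrib,
    Finset.sum_ite_eq' Finset.univ i f]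
  simp

lemma broyd_frob_sq {n : ℕ} (B A : Matrix (Fin n) (Fin n) ℝ) (i : Fin n) :
    frobNorm (broyd B A (Pi.single i 1) - A) ^ 2
      = (∑ j, ∑ k, (B - A) j k ^ 2) - ∑ j, (B - A) j i ^ 2 := by
  rw [frobNorm_sq]
  have : ∀ j, ∑ k, (broyd B A (Pi.single i 1) - A) j k ^ 2
      = (∑ k, (B - A) j k ^ 2) - (B - A) j i ^ 2 := by
    intro j
    have h1 : ∀ k, (broyd B A (Pi.single i 1) - A) j k ^ 2
        = if k = i then 0 else (B - A) j k ^ 2 := by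
      intro k
      rw [broyd_entry]
      by_cases h : k = i <;> simp [h]
    rw [Finset.sum_congr rfl fun k _ => h1 k, sum_ite_zero]
  rw [Finset.sum_congr rfl fun j _ => this j, Finset.sum_sub_distrib]

theorem sigma_update_bound_expectation {n : ℕ} (F : (Fin n → ℝ) → (Fin n → ℝ))
    (J : (Fin n → ℝ) → Matrix (Fin n) (Fin n) ℝ)
    (hF : ∀ x, HasFDerivAt F (matCLM (J x)) x)
    (xs : Fin n → ℝ) (hxs : F xs = 0) (M : ℝ) (hM : 0 < M)
    (hLip : ∀ x, specNorm (J x - J xs) ≤ M * vecNorm (x - xs))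
    (x xp : Fin n → ℝ) (B : Matrix (Fin n) (Fin n) ℝ) :
    (1 / (n : ℝ)) * ∑ i : Fin n, frobNorm (broyd B (J xp) (Pi.single i 1) - J xp) ^ 2
      ≤ (1 - 1 / (n : ℝ)) * frobNorm (B - J x) ^ 2
        + 2 * frobNorm (B - J x) * Real.sqrt n * M * (vecNorm (x - xs) + vecNorm (xp - xs))
        + n * M ^ 2 * (vecNorm (x - xs) + vecNorm (xp - xs)) ^ 2 := by
  rcases Nat.eq_zero_or_pos n with hn | hn
  · subst hn
    have h0 : ∀ X : Matrix (Fin 0) (Fin 0) ℝ, frobNorm X = 0 := by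
      intro X; simp [frobNorm]
    simp [h0]
  have hnR : (0 : ℝ) < n := by exact_mod_cast hn
  set σ := frobNorm (B - J x) with hσ
  set r := vecNorm (x - xs) with hr
  set rp := vecNorm (xp - xs) with hrp
  set c := Real.sqrt n * M * (r + rp) with hc
  have hσ0 : 0 ≤ σ := frobNorm_nonneg _
  have hr0 : 0 ≤ r := vecNorm_nonneg _
  have hrp0 : 0 ≤ rp := vecNorm_nonneg _
  have hc0 : 0 ≤ c := by positivity
  -- key reduction: LHS = (1 - 1/n) * frobNorm (B - J xp) ^ 2
  have hS : ∑ i : Fin n, frobNorm (broyd B (J xp) (Pi.single i 1) - J xp) ^ 2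
      = ((n : ℝ) - 1) * ∑ j, ∑ k, (B - J xp) j k ^ 2 := by
    rw [Finset.sum_congr rfl fun i _ => broyd_frob_sq B (J xp) i, Finset.sum_sub_distrib]
    rw [Finset.sum_const, Finset.sum_comm, Finset.card_univ, Fintype.card_fin]
    ring
  have hLHS : (1 / (n : ℝ)) * ∑ i : Fin n, frobNorm (broyd B (J xp) (Pi.single i 1) - J xp) ^ 2
      = (1 - 1 / (n : ℝ)) * frobNorm (B - J xp) ^ 2 := by
    rw [hS, frobNorm_sq]
    field_simp
  rw [hLHS]
  -- bound frobNorm (B - J xp) ≤ σ + c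
  have htri : frobNorm (B - J xp) ≤ σ + c := by
    have h1 : B - J xp = (B - J x) + ((J x - J xs) + (J xs - J xp)) := by abel
    have h2 : frobNorm (B - J xp) ≤ σ + (frobNorm (J x - J xs) + frobNorm (J xs - J xp)) := by
      rw [h1]
      exact le_trans (frob_triangle _ _) (by gcongr; exact frob_triangle _ _)
    have h3 : frobNorm (J x - J xs) ≤ Real.sqrt n * (M * r) :=
      le_trans (frob_le_sqrt_n_spec hn _) (by
        have := hLip x
        gcongr)
    have h4 : frobNorm (J xs - J xp) ≤ Real.sqrt n * (M * rp) := by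
      rw [frob_sub_comm]
      exact le_trans (frob_le_sqrt_n_spec hn _) (by
        have := hLip xp
        gcongr)
    calc frobNorm (B - J xp) ≤ σ + (frobNorm (J x - J xs) + frobNorm (J xs - J xp)) := h2
      _ ≤ σ + (Real.sqrt n * (M * r) + Real.sqrt n * (M * rp)) := by gcongr
      _ = σ + c := by rw [hc]; ring
  have hfp0 : 0 ≤ frobNorm (B - J xp) := frobNorm_nonneg _
  have hsq : frobNorm (B - J xp) ^ 2 ≤ (σ + c) ^ 2 := by nlinarith
  have hinv : 0 ≤ 1 / (n : ℝ) := by positivity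
  have hinv1 : 1 / (n : ℝ) ≤ 1 := by
    rw [div_le_one hnR]
    exact_mod_cast hn
  have hcsq : c ^ 2 = (n : ℝ) * M ^ 2 * (r + rp) ^ 2 := by
    rw [hc, mul_pow, mul_pow, Real.sq_sqrt (by positivity)]
  have h2σc : 2 * σ * Real.sqrt n * M * (r + rp) = 2 * σ * c := by rw [hc]; ring
  calc (1 - 1 / (n : ℝ)) * frobNorm (B - J xp) ^ 2 ≤ (1 - 1 / (n : ℝ)) * (σ + c) ^ 2 := by
        apply mul_le_mul_of_nonneg_left hsq
        linarith
    _ ≤ (1 - 1 / (n : ℝ)) * σ ^ 2 + 2 * σ * c + c ^ 2 := by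
        nlinarith [mul_nonneg hinv (mul_nonneg hσ0 hc0), mul_nonneg hinv (mul_nonneg hc0 hc0)]
    _ = (1 - 1 / (n : ℝ)) * σ ^ 2 + 2 * σ * Real.sqrt n * M * (r + rp)
        + (n : ℝ) * M ^ 2 * (r + rp) ^ 2 := by rw [h2σc, hcsq]
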